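/- arXiv:2109.06015 — 2 statements merged into one kernel-verified Lean document; each statement's English description precedes it below -/
import Mathlib

section
/- Let n ≥ 2 and F(r) = ∫_1^r 1/(s·√(1 - s^{-n})) ds. Then F(r) - F₀ - ln r + (1/(2n))·r^{-n} = O(r^{-n-1}) as r → ∞, where F₀ = ∫_1^∞ (1/s)(1/√(1 - s^{-n}) - 1) ds. -/
open MeasureTheory Set Real

namespace Stmt7Aux

noncomputable def g (n : ℕ) (s : ℝ) : ℝ := (1 / s) * (1 / Real.sqrt (1 - 1 / s ^ n) - 1)

lemma g_meas (n : ℕ) : Measurable (g n) := by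
  unfold g; fun_prop

lemma inv_sqrt_lb {x : ℝ} (hx0 : 0 ≤ x) (hx : x ≤ 1/2) :
    1 + x/2 ≤ 1 / Real.sqrt (1 - x) := by
  have h1 : (0:ℝ) < 1 - x := by linarith
  have hy : 0 < Real.sqrt (1 - x) := Real.sqrt_pos.mpr h1
  have hy2 : Real.sqrt (1 - x) ^ 2 = 1 - x := Real.sq_sqrt h1.le
  rw [le_div_iff₀ hy]
  nlinarith [sq_nonneg ((1 + x/2) * Real.sqrt (1-x) - 1), sq_nonneg x, hy.le,
    mul_nonneg (mul_nonneg (by linarith : (0:ℝ) ≤ 1 + x/2) hy.le) hx0]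

lemma inv_sqrt_ub {x : ℝ} (hx0 : 0 ≤ x) (hx : x ≤ 1/2) :
    1 / Real.sqrt (1 - x) ≤ 1 + x/2 + x^2 := by
  have h1 : (0:ℝ) < 1 - x := by linarith
  have hy : 0 < Real.sqrt (1 - x) := Real.sqrt_pos.mpr h1
  have hy2 : Real.sqrt (1 - x) ^ 2 = 1 - x := Real.sq_sqrt h1.le
  rw [div_le_iff₀ hy]
  set b := (1 + x/2 + x^2) * Real.sqrt (1-x) with hbdef
  have hb0 : 0 ≤ b := mul_nonneg (by nlinarith) hy.le
  have hb2 : 1 ≤ b^2 := by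
    have hb2' : b^2 = (1+x/2+x^2)^2 * (1-x) := by rw [hbdef, mul_pow, hy2]
    have e1 : 0 ≤ x^2 * (1/2 - x) := mul_nonneg (sq_nonneg x) (by linarith)
    have e2 : x^3 ≤ 1/8 := by nlinarith
    have e3 : 0 ≤ x^2 * (1/8 - x^3) := mul_nonneg (sq_nonneg x) (by linarith)
    nlinarith [sq_nonneg x]
  nlinarith

end Stmt7Aux

namespace Stmt7Aux

lemma x_small {n : ℕ} (hn : 1 ≤ n) {s : ℝ} (hs : 2 ≤ s) :
    0 < 1 / s ^ n ∧ 1 / s ^ n ≤ 1 / 2 := by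
  have hs0 : (0:ℝ) < s := by linarith
  refine ⟨by positivity, ?_⟩
  have h2 : (2:ℝ) ≤ s ^ n := le_trans hs (le_self_pow₀ (by linarith) (by omega))
  rw [div_le_div_iff₀ (by positivity) (by norm_num)]
  linarith

lemma g_lb {n : ℕ} (hn : 1 ≤ n) {s : ℝ} (hs : 2 ≤ s) :
    (1/2) * (1 / s ^ (n+1)) ≤ g n s := by
  obtain ⟨hx0, hx⟩ := x_small hn hs
  have hs0 : (0:ℝ) < s := by linarith
  have h := inv_sqrt_lb hx0.le hx
  have key : (1/s) * ((1/s^n)/2) ≤ g n s := by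
    unfold g
    have : (1/s^n)/2 ≤ 1 / Real.sqrt (1 - 1/s^n) - 1 := by linarith
    exact mul_le_mul_of_nonneg_left this (by positivity)
  calc (1/2) * (1 / s ^ (n+1)) = (1/s) * ((1/s^n)/2) := by rw [pow_succ]; field_simp
  _ ≤ g n s := key

lemma g_ub {n : ℕ} (hn : 1 ≤ n) {s : ℝ} (hs : 2 ≤ s) :
    g n s ≤ (1/2) * (1 / s ^ (n+1)) + 1 / s ^ (2*n+1) := by
  obtain ⟨hx0, hx⟩ := x_small hn hs
  have hs0 : (0:ℝ) < s := by linarith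
  have h := inv_sqrt_ub hx0.le hx
  have key : g n s ≤ (1/s) * ((1/s^n)/2 + (1/s^n)^2) := by
    unfold g
    have : 1 / Real.sqrt (1 - 1/s^n) - 1 ≤ (1/s^n)/2 + (1/s^n)^2 := by linarith
    exact mul_le_mul_of_nonneg_left this (by positivity)
  calc g n s ≤ (1/s) * ((1/s^n)/2 + (1/s^n)^2) := key
  _ = (1/2) * (1 / s ^ (n+1)) + 1 / s ^ (2*n+1) := by
      rw [pow_succ, two_mul, pow_add, pow_succ]
      field_simp
      ring

lemma g_nonneg {n : ℕ} (hn : 1 ≤ n) {s : ℝ} (hs : 1 < s) : 0 ≤ g n s := by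
  have hs0 : (0:ℝ) < s := by linarith
  have hxlt : 1 / s ^ n < 1 := by
    rw [div_lt_one (by positivity)]
    exact one_lt_pow₀ hs (by omega)
  have h1 : 0 < 1 - 1/s^n := by linarith
  have hle : Real.sqrt (1 - 1/s^n) ≤ 1 := Real.sqrt_le_one.mpr (by positivity |> fun h : (0:ℝ) ≤ 1/s^n => by linarith)
  have hy : 0 < Real.sqrt (1 - 1/s^n) := Real.sqrt_pos.mpr h1
  unfold g
  have : (1:ℝ) ≤ 1 / Real.sqrt (1 - 1/s^n) := by
    rw [le_div_iff₀ hy]; linarith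
  have h2 : 0 ≤ 1 / Real.sqrt (1 - 1/s^n) - 1 := by linarith
  positivity

-- bound near s = 1 : g n s ≤ 1/√(s-1)
lemma g_near {n : ℕ} (hn : 1 ≤ n) {s : ℝ} (hs : 1 < s) :
    g n s ≤ 1 / Real.sqrt (s - 1) := by
  have hs0 : (0:ℝ) < s := by linarith
  have h1 : 1 / s ^ n ≤ 1 / s :=
    one_div_le_one_div_of_le hs0 (le_self_pow₀ (by linarith) (by omega))
  have e : 1 - 1/s = (s-1)/s := by field_simp
  have h2 : (s - 1)/s ≤ 1 - 1/s^n := by rw [← e]; linarith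
  have hsq : Real.sqrt ((s-1)/s) ≤ Real.sqrt (1 - 1/s^n) := Real.sqrt_le_sqrt h2
  have hq0 : 0 < Real.sqrt ((s-1)/s) := Real.sqrt_pos.mpr (div_pos (by linarith) hs0)
  have hy : 0 < Real.sqrt (1 - 1/s^n) := lt_of_lt_of_le hq0 hsq
  have key : 1 / Real.sqrt (1 - 1/s^n) ≤ Real.sqrt s / Real.sqrt (s-1) := by
    rw [div_le_div_iff₀ hy (Real.sqrt_pos.mpr (by linarith))]
    calc 1 * Real.sqrt (s-1) = Real.sqrt (s-1) := one_mul _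
    _ = Real.sqrt s * Real.sqrt ((s-1)/s) := by
        rw [← Real.sqrt_mul hs0.le]
        congr 1; field_simp
    _ ≤ Real.sqrt s * Real.sqrt (1 - 1/s^n) := by
        exact mul_le_mul_of_nonneg_left hsq (Real.sqrt_nonneg s)
  have hstep : g n s ≤ (1/s) * (Real.sqrt s / Real.sqrt (s-1)) := by
    unfold g
    have : 1 / Real.sqrt (1 - 1/s^n) - 1 ≤ Real.sqrt s / Real.sqrt (s-1) := by
      have : (0:ℝ) ≤ Real.sqrt s / Real.sqrt (s-1) := by positivity
      linarith [key]
    exact mul_le_mul_of_nonneg_left this (by positivity)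
  calc g n s ≤ (1/s) * (Real.sqrt s / Real.sqrt (s-1)) := hstep
  _ = (Real.sqrt s / s) * (1 / Real.sqrt (s-1)) := by ring
  _ ≤ 1 * (1 / Real.sqrt (s-1)) := by
      apply mul_le_mul_of_nonneg_right _ (by positivity)
      rw [div_le_one hs0]; nlinarith [Real.sq_sqrt hs0.le, Real.sqrt_nonneg s, Real.sqrt_le_sqrt (by nlinarith : s ≤ s^2), Real.sqrt_sq hs0.le]
  _ = 1 / Real.sqrt (s - 1) := one_mul _

end Stmt7Aux

namespace Stmt7Aux

lemma integrableOn_inv_pow (m : ℕ) (hm : 2 ≤ m) {r : ℝ} (hr : 0 < r) :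
    IntegrableOn (fun s : ℝ => 1 / s ^ m) (Ioi r) := by
  have h := integrableOn_Ioi_rpow_of_lt (a := -(m:ℝ)) (by
    have : (2:ℝ) ≤ m := by exact_mod_cast hm
    linarith) hr
  apply h.congr_fun _ measurableSet_Ioi
  intro s hs
  have hs0 : 0 < s := lt_trans hr hs
  simp [Real.rpow_neg hs0.le, Real.rpow_natCast]

lemma integral_inv_pow (m : ℕ) (hm : 2 ≤ m) {r : ℝ} (hr : 0 < r) :
    ∫ s in Ioi r, 1 / s ^ m = 1 / ((m - 1) * r ^ (m - 1)) := by
  have hm1 : (1:ℝ) < m := by exact_mod_cast (by omega : 1 < m)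
  rw [setIntegral_congr_fun measurableSet_Ioi
    (g := fun s : ℝ => s ^ (-(m:ℝ)))
    (fun s hs => by
      have hs0 : (0:ℝ) < s := lt_trans hr hs
      simp [Real.rpow_neg hs0.le, Real.rpow_natCast]),
    integral_Ioi_rpow_of_lt (by linarith) hr]
  have hcast : ((m - 1 : ℕ) : ℝ) = (m:ℝ) - 1 := by
    have : 1 ≤ m := by omega
    push_cast [this]; ring
  rw [show -(m:ℝ) + 1 = -(((m-1:ℕ)):ℝ) by rw [hcast]; ring,
    Real.rpow_neg hr.le, Real.rpow_natCast]
  rw [hcast]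
  have d1 : (m:ℝ) - 1 ≠ 0 := by linarith
  have d2 : r ^ (m-1) ≠ 0 := (pow_pos hr _).ne'
  field_simp

lemma integrable_near : IntegrableOn (fun s : ℝ => 1 / Real.sqrt (s - 1)) (Ioc 1 2) := by
  have h : IntervalIntegrable (fun x : ℝ => x ^ (-1/2 : ℝ)) volume 0 1 :=
    intervalIntegral.intervalIntegrable_rpow' (by norm_num)
  have h2 : IntervalIntegrable (fun x : ℝ => (x - 1) ^ (-1/2 : ℝ)) volume 1 2 := by
    have h2' := h.comp_sub_right 1
    rw [show (0:ℝ)+1 = 1 by norm_num, show (1:ℝ)+1 = 2 by norm_num] at h2'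
    exact h2'
  rw [intervalIntegrable_iff_integrableOn_Ioc_of_le (by norm_num)] at h2
  apply h2.congr_fun _ measurableSet_Ioc
  intro s hs
  have h0 : (0:ℝ) ≤ s - 1 := by linarith [hs.1]
  simp only
  rw [show (-1/2:ℝ) = -(1/2) by norm_num, Real.rpow_neg h0, ← Real.sqrt_eq_rpow, one_div]

lemma g_integrableOn_Ioi_one {n : ℕ} (hn : 1 ≤ n) : IntegrableOn (g n) (Ioi 1) := by
  have hunion : Ioc (1:ℝ) 2 ∪ Ioi 2 = Ioi 1 := Ioc_union_Ioi_eq_Ioi (by norm_num)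
  rw [← hunion]
  apply IntegrableOn.union
  · -- near 1
    apply Integrable.mono (integrable_near) ((g_meas n).aestronglyMeasurable.restrict)
    filter_upwards [ae_restrict_mem measurableSet_Ioc] with s hs
    have h1 : 1 < s := hs.1
    rw [Real.norm_eq_abs, Real.norm_eq_abs, abs_of_nonneg (g_nonneg hn h1),
      abs_of_nonneg (by positivity)]
    exact g_near hn h1
  · -- far
    apply Integrable.mono (integrableOn_inv_pow (n+1) (by omega) (by norm_num : (0:ℝ) < 2))
      ((g_meas n).aestronglyMeasurable.restrict)
    filter_upwards [ae_restrict_mem measurableSet_Ioi] with s hs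
    have h2 : (2:ℝ) ≤ s := le_of_lt hs
    have h1 : 1 < s := by linarith
    rw [Real.norm_eq_abs, Real.norm_eq_abs, abs_of_nonneg (g_nonneg hn h1),
      abs_of_nonneg (by positivity)]
    have hub := g_ub hn h2
    have : (0:ℝ) < s := by linarith
    have h3 : 1 / s ^ (2*n+1) ≤ (1/2) * (1 / s^(n+1)) := by
      rw [div_le_iff₀ (by positivity)]
      have hsn : (2:ℝ) ≤ s ^ n := le_trans h2 (le_self_pow₀ (by linarith) (by omega))
      have hkey : s ^ (2*n+1) = s^n * s^(n+1) := by
        rw [show 2*n+1 = n+(n+1) by ring, pow_add]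
      rw [show (1:ℝ)/2 * (1/s^(n+1)) * s^(2*n+1) = s^(2*n+1) / (2 * s^(n+1)) by ring,
        le_div_iff₀ (by positivity)]
      nlinarith [pow_pos this (n+1)]
    linarith

end Stmt7Aux

namespace Stmt7Aux

lemma g_add {n : ℕ} (hn : 1 ≤ n) {s : ℝ} (hs : 1 < s) :
    1 / (s * Real.sqrt (1 - 1 / s ^ n)) = g n s + 1 / s := by
  have hs0 : (0:ℝ) < s := by linarith
  have hxlt : 1 / s ^ n < 1 := by
    rw [div_lt_one (by positivity)]
    exact one_lt_pow₀ hs (by omega)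
  have hy : 0 < Real.sqrt (1 - 1/s^n) := Real.sqrt_pos.mpr (by linarith)
  unfold g
  field_simp
  ring

end Stmt7Aux

open Stmt7Aux

theorem stmt7 (n : ℕ) (hn : 2 ≤ n) :
    let F : ℝ → ℝ := fun r => ∫ s in Set.Ioc 1 r, 1 / (s * Real.sqrt (1 - 1 / s ^ n))
    let F₀ : ℝ := ∫ s in Set.Ioi 1, (1 / s) * (1 / Real.sqrt (1 - 1 / s ^ n) - 1)
    ∃ C > 0, ∃ R ≥ (1 : ℝ), ∀ r ≥ R,
      |F r - F₀ - Real.log r + 1 / (2 * n * r ^ n)| ≤ C / r ^ (n + 1) := by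
  intro F F₀
  have hn1 : 1 ≤ n := by omega
  refine ⟨1, one_pos, 2, by norm_num, fun r hr => ?_⟩
  have hr1 : (1:ℝ) < r := by linarith
  have hr0 : (0:ℝ) < r := by linarith
  have hnR : (0:ℝ) < n := by exact_mod_cast (by omega : 0 < n)
  have hg := g_integrableOn_Ioi_one hn1
  have hgIoc : IntegrableOn (g n) (Ioc 1 r) := hg.mono Ioc_subset_Ioi_self le_rfl
  have hgIoi : IntegrableOn (g n) (Ioi r) := hg.mono (Ioi_subset_Ioi hr1.le) le_rfl
  have hinv : IntegrableOn (fun s : ℝ => 1 / s) (Ioc 1 r) := by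
    apply ((continuousOn_const.div continuousOn_id (fun x hx => ?_)).integrableOn_Icc).mono_set
      Ioc_subset_Icc_self
    · exact ne_of_gt (lt_of_lt_of_le one_pos hx.1)
  have hlog : ∫ s in Ioc 1 r, (1:ℝ) / s = Real.log r := by
    rw [← intervalIntegral.integral_of_le hr1.le, integral_one_div (by
      rw [Set.uIcc_of_le hr1.le]
      intro h
      exact absurd h.1 (by norm_num))]
    rw [div_one]
  have hF : F r = (∫ s in Ioc 1 r, g n s) + Real.log r := by
    show (∫ s in Set.Ioc 1 r, 1 / (s * Real.sqrt (1 - 1 / s ^ n))) = _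
    rw [setIntegral_congr_fun measurableSet_Ioc
      (g := fun s => g n s + 1/s) (fun s hs => g_add hn1 hs.1),
      integral_add hgIoc hinv, hlog]
  have hsplit : F₀ = (∫ s in Ioc 1 r, g n s) + ∫ s in Ioi r, g n s := by
    have e0 : F₀ = ∫ s in Ioi 1, g n s := rfl
    rw [e0, ← Ioc_union_Ioi_eq_Ioi hr1.le,
      setIntegral_union (Ioc_disjoint_Ioi le_rfl) measurableSet_Ioi hgIoc hgIoi]
  set T := ∫ s in Ioi r, g n s with hT
  -- integral values
  have hIlow : IntegrableOn (fun s : ℝ => (1/2) * (1 / s ^ (n+1))) (Ioi r) :=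
    (integrableOn_inv_pow (n+1) (by omega) hr0).const_mul _
  have hIq : IntegrableOn (fun s : ℝ => 1 / s ^ (2*n+1)) (Ioi r) :=
    integrableOn_inv_pow (2*n+1) (by omega) hr0
  have hvlow : ∫ s in Ioi r, (1/2) * (1 / s ^ (n+1)) = 1 / (2 * n * r ^ n) := by
    rw [MeasureTheory.integral_const_mul, integral_inv_pow (n+1) (by omega) hr0]
    simp only [Nat.add_sub_cancel]
    push_cast
    rw [show ((n:ℝ)+1-1) = (n:ℝ) by ring]
    rw [eq_div_iff (by positivity)]
    field_simp
  have hvq : ∫ s in Ioi r, (1:ℝ) / s ^ (2*n+1) = 1 / (2 * n * r ^ (2*n)) := by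
    rw [integral_inv_pow (2*n+1) (by omega) hr0]
    simp only [Nat.add_sub_cancel]
    push_cast
    ring_nf
  have hT_lb : 1 / (2 * n * r ^ n) ≤ T := by
    rw [← hvlow]
    exact setIntegral_mono_on hIlow hgIoi measurableSet_Ioi
      (fun s hs => g_lb hn1 (by linarith [mem_Ioi.mp hs]))
  have hT_ub : T ≤ 1 / (2 * n * r ^ n) + 1 / (2 * n * r ^ (2*n)) := by
    rw [← hvlow, ← hvq, ← integral_add hIlow hIq]
    exact setIntegral_mono_on hgIoi (hIlow.add hIq) measurableSet_Ioi
      (fun s hs => g_ub hn1 (by linarith [mem_Ioi.mp hs]))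
  have hkey : F r - F₀ - Real.log r + 1 / (2 * n * r ^ n) = 1 / (2 * n * r ^ n) - T := by
    rw [hF, hsplit]; ring
  rw [hkey]
  have habs : |1 / (2 * n * r ^ n) - T| ≤ 1 / (2 * n * r ^ (2*n)) :=
    abs_le.mpr ⟨by linarith, by
      have : (0:ℝ) < 2 * n * r ^ (2*n) := by positivity
      have h0 : 0 ≤ 1 / (2 * n * r ^ (2*n)) := by positivity
      linarith⟩
  refine le_trans habs ?_
  rw [one_div, one_div]
  apply inv_anti₀ (by positivity)
  have h1 : r ^ (n+1) ≤ r ^ (2*n) := pow_le_pow_right₀ (by linarith) (by omega)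
  have h2 : (1:ℝ) ≤ 2 * n := by
    have : (1:ℝ) ≤ n := by exact_mod_cast hn1
    linarith
  nlinarith [pow_pos hr0 (n+1), pow_pos hr0 (2*n)]
end

section
/- Let c : (a,∞) → ℝ be continuous and let f : [a,∞) → ℝ be continuous on [a,∞), twice differentiable on (a,∞), satisfying f'' + c·(f')² = 0 on (a,∞). If f(a) = L and f(r) → L as r → ∞ for some L ∈ ℝ, then f is constant equal to L on [a,∞). -/
open Set Filter

theorem stmt8 (a L : ℝ) (c f : ℝ → ℝ)
    (hc : ContinuousOn c (Set.Ioi a))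
    (hf : ContinuousOn f (Set.Ici a))
    (hf' : ∀ r ∈ Set.Ioi a, DifferentiableAt ℝ f r)
    (hf'' : ∀ r ∈ Set.Ioi a, DifferentiableAt ℝ (deriv f) r)
    (hODE : ∀ r ∈ Set.Ioi a, deriv (deriv f) r + c r * (deriv f r) ^ 2 = 0)
    (ha : f a = L)
    (hlim : Filter.Tendsto f Filter.atTop (nhds L)) :
    ∀ r ∈ Set.Ici a, f r = L := by
  set g := deriv f with hg
  -- continuity of g on Ioi a
  have hgc : ContinuousOn g (Set.Ioi a) := fun x hx =>
    ((hf'' x hx).continuousAt).continuousWithinAt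
  -- propagation of zeros of g to the right
  have hprop : ∀ z b : ℝ, a < z → g z = 0 → ∀ t ∈ Set.Icc z b, g t = 0 := by
    intro z b hz hz0 t ht
    have hsub : Set.Icc z b ⊆ Set.Ioi a := fun x hx => lt_of_lt_of_le hz hx.1
    have hcg : ContinuousOn (fun t => c t * g t) (Set.Icc z b) :=
      (hc.mono hsub).mul (hgc.mono hsub)
    obtain ⟨K, hK⟩ := (isCompact_Icc).exists_bound_of_continuousOn hcg
    have hgcont : ContinuousOn g (Set.Icc z b) := hgc.mono hsub
    have hder : ∀ x ∈ Set.Ico z b,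
        HasDerivWithinAt g (-(c x * g x ^ 2)) (Set.Ici x) x := by
      intro x hx
      have hxa : x ∈ Set.Ioi a := hsub ⟨hx.1, le_of_lt hx.2⟩
      have h1 : HasDerivAt g (deriv g x) x := (hf'' x hxa).hasDerivAt
      have h2 : deriv g x = -(c x * g x ^ 2) := by
        have := hODE x hxa; linarith
      rw [h2] at h1
      exact h1.hasDerivWithinAt
    have hbound : ∀ x ∈ Set.Ico z b, ‖-(c x * g x ^ 2)‖ ≤ K * ‖g x‖ + 0 := by
      intro x hx
      have hx' : x ∈ Set.Icc z b := ⟨hx.1, le_of_lt hx.2⟩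
      have := hK x hx'
      have : |c x * g x| ≤ K := this
      calc ‖-(c x * g x ^ 2)‖ = |c x * g x| * |g x| := by
            rw [norm_neg]
            simp [abs_mul, pow_two, mul_assoc]
        _ ≤ K * ‖g x‖ + 0 := by
            rw [add_zero]
            exact mul_le_mul_of_nonneg_right this (abs_nonneg _)
    have hz0' : ‖g z‖ ≤ 0 := by simp [hz0]
    have := norm_le_gronwallBound_of_norm_deriv_right_le hgcont hder hz0' hbound t ht
    rw [gronwallBound_ε0_δ0] at this
    exact norm_le_zero_iff.mp this
  -- g has constant sign on Ioi a
  have hsign : (∀ r ∈ Set.Ioi a, 0 ≤ g r) ∨ (∀ r ∈ Set.Ioi a, g r ≤ 0) := by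
    by_contra h
    push_neg at h
    obtain ⟨⟨n, hn, hn0⟩, ⟨p, hp, hp0⟩⟩ := h
    -- g n < 0, g p > 0
    rcases lt_trichotomy n p with hnp | hnp | hnp
    · -- zero between n and p
      have hsub : Set.Icc n p ⊆ Set.Ioi a := fun x hx => lt_of_lt_of_le hn hx.1
      obtain ⟨z, hz, hz0⟩ := intermediate_value_Icc (le_of_lt hnp) (hgc.mono hsub)
        (⟨le_of_lt hn0, le_of_lt hp0⟩ : (0:ℝ) ∈ Set.Icc (g n) (g p))
      have : g p = 0 := hprop z p (lt_of_lt_of_le hn hz.1) hz0 p ⟨hz.2, le_refl p⟩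
      linarith
    · subst hnp; linarith
    · have hsub : Set.Icc p n ⊆ Set.Ioi a := fun x hx => lt_of_lt_of_le hp hx.1
      obtain ⟨z, hz, hz0⟩ := intermediate_value_Icc' (le_of_lt hnp) (hgc.mono hsub)
        (⟨le_of_lt hn0, le_of_lt hp0⟩ : (0:ℝ) ∈ Set.Icc (g n) (g p))
      have : g n = 0 := hprop z n (lt_of_lt_of_le hp hz.1) hz0 n ⟨hz.2, le_refl n⟩
      linarith
  have hIci : Convex ℝ (Set.Ici a) := convex_Ici a
  have hdiff : DifferentiableOn ℝ f (interior (Set.Ici a)) := by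
    rw [interior_Ici]
    exact fun x hx => (hf' x hx).differentiableWithinAt
  rcases hsign with hpos | hneg
  · -- f monotone on Ici a
    have hmono : MonotoneOn f (Set.Ici a) := by
      apply monotoneOn_of_deriv_nonneg hIci hf hdiff
      intro x hx
      rw [interior_Ici] at hx
      exact hpos x hx
    intro r hr
    have h1 : L ≤ f r := ha ▸ hmono (le_refl a : a ∈ Set.Ici a) hr hr
    have h2 : f r ≤ L := by
      refine ge_of_tendsto hlim ?_
      filter_upwards [eventually_ge_atTop (max r a)] with s hs
      exact hmono hr (le_trans hr (le_trans (le_max_left r a) hs))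
        (le_trans (le_max_left r a) hs)
    linarith
  · have hmono : AntitoneOn f (Set.Ici a) := by
      apply antitoneOn_of_deriv_nonpos hIci hf hdiff
      intro x hx
      rw [interior_Ici] at hx
      exact hneg x hx
    intro r hr
    have h1 : f r ≤ L := ha ▸ hmono (le_refl a : a ∈ Set.Ici a) hr hr
    have h2 : L ≤ f r := by
      refine le_of_tendsto hlim ?_
      filter_upwards [eventually_ge_atTop (max r a)] with s hs
      exact hmono hr (le_trans hr (le_trans (le_max_left r a) hs))
        (le_trans (le_max_left r a) hs)
    linarith
end
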